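/- arXiv:2209.01504 — 3 statements merged into one kernel-verified Lean document; each statement's English description precedes it below -/
import Mathlib

section
/- If i ∈ I^j, then the set Ω^j_{ℓ+1}(i), being a union of at most 2ⁿ open axis-aligned hyperrectangles of the form ∏_k (ξ_{\bar{i}_k}, ξ_{\bar{i}_k + p_k + 1}) with 0 ≤ \bar{i}_k − i_k ≤ 1 componentwise, all containing the common open box ∏_k (ξ_{i_k+1}, ξ_{i_k+2}), is open and star-shaped, hence homeomorphic to an open n-ball. -/
/-!
Every box of the union contains the common box `K`, so the union is star-shaped about each point
of `K`, and it is open as a union of open boxes. For the homeomorphism, translate a point `c ∈ K`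
to the origin: the union of finitely many open convex sets containing `0` is the sublevel set
`{G < 1}` of the minimum `G` of their gauges, a continuous, nonnegative, positively homogeneous
function, and `x ↦ (1 - G x)⁻¹ • x` maps `{G < 1}` homeomorphically onto the whole space
(inverse `y ↦ (1 + G y)⁻¹ • y`), which in turn is homeomorphic to the open unit ball.
-/

open Set

section RadialRescaling

variable {E : Type*} [AddCommGroup E] [Module ℝ E] [TopologicalSpace E]

noncomputable def sublevelLtOneHomeomorph [ContinuousSMul ℝ E] (G : E → ℝ) (hG : Continuous G)
    (hG_nonneg : ∀ x, 0 ≤ G x) (hG_smul : ∀ t : ℝ, 0 ≤ t → ∀ x, G (t • x) = t * G x) :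
    {x | G x < 1} ≃ₜ E where
  toFun x := (1 - G x)⁻¹ • (x : E)
  invFun y := ⟨(1 + G y)⁻¹ • y, by
    have hpos : 0 < 1 + G y := by linarith [hG_nonneg y]
    change G _ < 1
    rw [hG_smul _ (inv_nonneg.2 hpos.le), inv_mul_lt_iff₀ hpos]
    linarith⟩
  left_inv := by
    rintro ⟨x, hx : G x < 1⟩
    have hpos : 0 < 1 - G x := by linarith
    ext
    change (1 + G ((1 - G x)⁻¹ • x))⁻¹ • (1 - G x)⁻¹ • x = x
    rw [hG_smul _ (inv_nonneg.2 hpos.le), smul_smul]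
    convert one_smul ℝ x using 2
    field_simp
    ring
  right_inv y := by
    have hpos : 0 < 1 + G y := by linarith [hG_nonneg y]
    change (1 - G ((1 + G y)⁻¹ • y))⁻¹ • (1 + G y)⁻¹ • y = y
    rw [hG_smul _ (inv_nonneg.2 hpos.le), smul_smul]
    convert one_smul ℝ y using 2
    field_simp
    ring
  continuous_toFun := by
    refine (Continuous.inv₀ (by fun_prop) fun x => ?_).smul continuous_subtype_val
    exact sub_ne_zero.2 (ne_of_gt x.2)
  continuous_invFun := by
    refine Continuous.subtype_mk ((Continuous.inv₀ (by fun_prop) fun y => ?_).smul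
      continuous_id) _
    linarith [hG_nonneg y]

variable [IsTopologicalAddGroup E] [ContinuousSMul ℝ E]

theorem nonempty_homeomorph_biUnion_of_convex_of_zero_mem {ι : Type*} {A : Set ι}
    (hA : A.Finite) (hA_ne : A.Nonempty) {s : ι → Set E} (hs_open : ∀ a ∈ A, IsOpen (s a))
    (hs_conv : ∀ a ∈ A, Convex ℝ (s a)) (hs_zero : ∀ a ∈ A, (0 : E) ∈ s a) :
    Nonempty (↥(⋃ a ∈ A, s a) ≃ₜ E) := by
  set T := hA.toFinset
  have hT_mem : ∀ a, a ∈ T ↔ a ∈ A := fun a => hA.mem_toFinset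
  have hT : T.Nonempty := hA.toFinset_nonempty.2 hA_ne
  set G : E → ℝ := fun x => T.inf' hT fun a => gauge (s a) x
  have hG : Continuous G := continuous_iff_continuousAt.2 fun x =>
    ContinuousAt.finset_inf'_apply hT fun a ha => by
      rw [hT_mem] at ha
      exact (continuous_gauge (hs_conv a ha)
        ((hs_open a ha).mem_nhds (hs_zero a ha))).continuousAt
  have hG_nonneg : ∀ x, 0 ≤ G x := fun x => Finset.le_inf' hT _ fun a _ => gauge_nonneg x
  have hG_smul : ∀ t : ℝ, 0 ≤ t → ∀ x, G (t • x) = t * G x := fun t ht x => by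
    simp only [G, gauge_smul_of_nonneg ht, smul_eq_mul]
    exact (Finset.apply_inf'_eq_inf'_comp hT (t * ·) fun u v => mul_min_of_nonneg _ _ ht).symm
  have hU : (⋃ a ∈ A, s a) = {x | G x < 1} := by
    ext x
    simp only [mem_iUnion₂, mem_ofPred_eq, G, Finset.inf'_lt_iff, hT_mem]
    refine exists_congr fun a => ⟨fun ⟨ha, hx⟩ => ⟨ha, gauge_lt_one_of_mem_of_isOpen
      (hs_open a ha) hx⟩, fun ⟨ha, hx⟩ => ⟨ha, ?_⟩⟩
    rw [← setOfPred_gauge_lt_one_eq_self_of_isOpen (hs_conv a ha) (hs_zero a ha) (hs_open a ha)]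
    exact hx
  exact ⟨(Homeomorph.setCongr hU).trans (sublevelLtOneHomeomorph G hG hG_nonneg hG_smul)⟩

theorem nonempty_homeomorph_biUnion_of_convex_of_mem {ι : Type*} {A : Set ι}
    (hA : A.Finite) (hA_ne : A.Nonempty) {s : ι → Set E} (hs_open : ∀ a ∈ A, IsOpen (s a))
    (hs_conv : ∀ a ∈ A, Convex ℝ (s a)) {c : E} (hc : ∀ a ∈ A, c ∈ s a) :
    Nonempty (↥(⋃ a ∈ A, s a) ≃ₜ E) := by
  set e := Homeomorph.addLeft c
  obtain ⟨f⟩ := nonempty_homeomorph_biUnion_of_convex_of_zero_mem hA hA_ne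
    (s := fun a => e ⁻¹' s a) (fun a ha => e.isOpen_preimage.2 (hs_open a ha))
    (fun a ha => (hs_conv a ha).translate_preimage_right c)
    (fun a ha => by simpa [e] using hc a ha)
  rw [← preimage_iUnion₂] at f
  exact ⟨((e.image _).trans (Homeomorph.setCongr (e.image_preimage _))).symm.trans f⟩

end RadialRescaling

theorem isOpen_pi_Ioo {ι : Type*} [Finite ι] (l u : ι → ℝ) :
    IsOpen (univ.pi fun k => Ioo (l k) (u k)) :=
  isOpen_set_pi finite_univ fun _ _ => isOpen_Ioo

theorem convex_pi_Ioo {ι : Type*} (l u : ι → ℝ) : Convex ℝ (univ.pi fun k => Ioo (l k) (u k)) :=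
  convex_pi fun _ _ => convex_Ioo _ _

theorem stmt_13_general {n : ℕ}
    (ξ : Fin n → ℤ → ℝ) (p : Fin n → ℕ)
    (hmono : ∀ k, Monotone (ξ k)) (hp : ∀ k, 1 ≤ p k)
    (supp0 : (Fin n → ℤ) → Set (Fin n → ℝ))
    (hsupp0 : ∀ a : Fin n → ℤ,
      supp0 a = Set.univ.pi fun k => Set.Ioo (ξ k (a k)) (ξ k (a k + p k + 1)))
    (Ω' : Set (Fin n → ℝ))
    (j i : Fin n → ℤ) (hj : ∀ k, j k = 0 ∨ j k = 1)
    (hi : i ∈ {i' : Fin n → ℤ | ∃ a : Fin n → ℤ, supp0 a ⊆ Ω' ∧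
          ∀ k, j k - 1 ≤ i' k - a k ∧ i' k - a k ≤ 0})
    (Kbox : Set (Fin n → ℝ))
    (hKbox : Kbox = Set.univ.pi fun k => Set.Ioo (ξ k (i k + 1)) (ξ k (i k + 2)))
    (hKne : Kbox.Nonempty)
    (U : Set (Fin n → ℝ))
    (hU : U = ⋃ a ∈ {a : Fin n → ℤ | supp0 a ⊆ Ω' ∧
            ∀ k, 0 ≤ a k - i k ∧ a k - i k ≤ 1 - j k}, supp0 a) :
    IsOpen U ∧ (∀ x ∈ Kbox, StarConvex ℝ x U) ∧
    Nonempty (↥U ≃ₜ ↥(Metric.ball (0 : EuclideanSpace ℝ (Fin n)) 1)) := by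
  obtain rfl : supp0 = _ := funext hsupp0
  subst hKbox hU
  set A := {a : Fin n → ℤ | _ ∧ ∀ k, 0 ≤ a k - i k ∧ a k - i k ≤ 1 - j k}
  have hK_sub : ∀ a ∈ A, univ.pi (fun k => Ioo (ξ k (i k + 1)) (ξ k (i k + 2))) ⊆
      univ.pi fun k => Ioo (ξ k (a k)) (ξ k (a k + p k + 1)) := fun a ha =>
    pi_mono fun k _ => Ioo_subset_Ioo (hmono k (by have := ha.2 k; have := hj k; omega))
      (hmono k (by have := ha.2 k; have := hp k; omega))
  have hA_fin : A.Finite := (Finite.pi fun k => finite_Icc (i k) (i k + 1)).subset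
    fun a ha k _ => by have := ha.2 k; have := hj k; exact ⟨by omega, by omega⟩
  have hA_ne : A.Nonempty := by
    obtain ⟨a, ha, hai⟩ := hi
    exact ⟨a, ha, fun k => by have := hai k; omega⟩
  obtain ⟨c, hc⟩ := hKne
  obtain ⟨e⟩ := nonempty_homeomorph_biUnion_of_convex_of_mem hA_fin hA_ne
    (fun a _ => isOpen_pi_Ioo _ _) (fun a _ => convex_pi_Ioo _ _) fun a ha => hK_sub a ha hc
  refine ⟨isOpen_biUnion fun a _ => isOpen_pi_Ioo _ _,
    fun x hx => starConvex_iUnion₂ fun a ha => (convex_pi_Ioo _ _).starConvex (hK_sub a ha hx),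
    ⟨e.trans ((EuclideanSpace.equiv (Fin n) ℝ).symm.toHomeomorph.trans Homeomorph.unitBall)⟩⟩

/-- If `i ∈ I^j`, then `Ω^j_{ℓ+1}(i)`, being a union of at most `2ⁿ` open axis-aligned
hyperrectangles `∏_k (ξ_{ī_k}, ξ_{ī_k+p_k+1})` with `0 ≤ ī − i ≤ 1` componentwise, all of
which contain the common open box `∏_k (ξ_{i_k+1}, ξ_{i_k+2})`, is open and star-shaped, and
hence homeomorphic to an open `n`-ball. -/
theorem stmt_13 {n : ℕ}
    (ξ : Fin n → ℤ → ℝ) (p : Fin n → ℕ)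
    (hmono : ∀ k, Monotone (ξ k)) (hp : ∀ k, 1 ≤ p k)
    (hmult : ∀ k t, ξ k t < ξ k (t + p k + 1))
    (supp0 : (Fin n → ℤ) → Set (Fin n → ℝ))
    (hsupp0 : ∀ a : Fin n → ℤ,
      supp0 a = Set.univ.pi fun k => Set.Ioo (ξ k (a k)) (ξ k (a k + p k + 1)))
    (Ω' : Set (Fin n → ℝ))
    (j i : Fin n → ℤ) (hj : ∀ k, j k = 0 ∨ j k = 1)
    (hi : i ∈ {i' : Fin n → ℤ | ∃ a : Fin n → ℤ, supp0 a ⊆ Ω' ∧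
          ∀ k, j k - 1 ≤ i' k - a k ∧ i' k - a k ≤ 0})
    (Kbox : Set (Fin n → ℝ))
    (hKbox : Kbox = Set.univ.pi fun k => Set.Ioo (ξ k (i k + 1)) (ξ k (i k + 2)))
    (hKne : Kbox.Nonempty)
    (U : Set (Fin n → ℝ))
    (hU : U = ⋃ a ∈ {a : Fin n → ℤ | supp0 a ⊆ Ω' ∧
            ∀ k, 0 ≤ a k - i k ∧ a k - i k ≤ 1 - j k}, supp0 a) :
    IsOpen U ∧ (∀ x ∈ Kbox, StarConvex ℝ x U) ∧
    Nonempty (↥U ≃ₜ ↥(Metric.ball (0 : EuclideanSpace ℝ (Fin n)) 1)) :=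
  stmt_13_general ξ p hmono hp supp0 hsupp0 Ω' j i hj hi Kbox hKbox hKne U hU
end

section
/- Let α_{\bar{i}} and α_{\bar{i}+Δ\bar{i}} be 0-form B-splines supported in Ω_{ℓ+1} with Δ\bar{i} componentwise non-negative, connected by a shortest chain. Then the closure of the support of every B-spline in the shortest chain contains the intersection of the closures of the supports of α_{\bar{i}} and α_{\bar{i}+Δ\bar{i}}. -/
/-- If two 0-form B-splines `α_ī` and `α_{ī+Δī}` supported in `Ω_{ℓ+1}` (with `Δī`
componentwise non-negative) are connected by a shortest chain, then the closure of the
support of every B-spline in the shortest chain contains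
`cl(supp α_ī) ∩ cl(supp α_{ī+Δī})`. -/
theorem stmt_14 {n : ℕ}
    (ξ : Fin n → ℤ → ℝ) (p : Fin n → ℕ)
    (hmono : ∀ k, Monotone (ξ k))
    (hmult : ∀ k t, ξ k t < ξ k (t + p k + 1))
    (supp0 : (Fin n → ℤ) → Set (Fin n → ℝ))
    (hsupp0 : ∀ a : Fin n → ℤ,
      supp0 a = Set.univ.pi fun k => Set.Ioo (ξ k (a k)) (ξ k (a k + p k + 1)))
    (Ω' : Set (Fin n → ℝ))
    (ib Δ : Fin n → ℤ) (hΔ : ∀ k, 0 ≤ Δ k)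
    (hib : supp0 ib ⊆ Ω') (hib' : supp0 (ib + Δ) ⊆ Ω')
    -- a shortest chain from `α_ib` to `α_{ib+Δ}`:
    (r : ℕ) (hr : (r : ℤ) = ∑ k, Δ k)
    (Δs : ℕ → Fin n → ℤ) (h0 : Δs 0 = 0) (hlastΔ : Δs r = Δ)
    (hstep : ∀ l < r, ∃ k₀ : Fin n,
      Δs (l + 1) = Δs l + fun k => if k = k₀ then 1 else 0)
    (hchain : ∀ l ≤ r, supp0 (ib + Δs l) ⊆ Ω') :
    ∀ l ≤ r,
      closure (supp0 ib) ∩ closure (supp0 (ib + Δ)) ⊆ closure (supp0 (ib + Δs l)) := by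
  -- each step is componentwise monotone
  have hstep' : ∀ l < r, ∀ k, Δs l k ≤ Δs (l + 1) k := by
    intro l hl k
    obtain ⟨k₀, h⟩ := hstep l hl
    rw [h]
    simp only [Pi.add_apply]
    split_ifs <;> omega
  -- componentwise monotone along the chain
  have hmonoΔ : ∀ m, m ≤ r → ∀ l, l ≤ m → ∀ k, Δs l k ≤ Δs m k := by
    intro m
    induction m with
    | zero =>
      intro _ l hl k
      have : l = 0 := Nat.le_zero.mp hl
      rw [this]
    | succ m ih =>
      intro hmr l hl k
      rcases Nat.lt_or_ge l (m+1) with h | h'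
      · exact le_trans (ih (by omega) l (by omega) k) (hstep' m (by omega) k)
      · have h : l = m + 1 := by omega
        rw [h]
  -- closure of the support is a product of closed intervals
  have hcl : ∀ a : Fin n → ℤ, closure (supp0 a)
      = Set.univ.pi fun k => Set.Icc (ξ k (a k)) (ξ k (a k + p k + 1)) := by
    intro a
    rw [hsupp0, closure_pi_set]
    exact Set.pi_congr rfl fun k _ => closure_Ioo (hmult k (a k)).ne
  intro l hl x hx
  obtain ⟨hx1, hx2⟩ := hx
  rw [hcl] at hx1 hx2 ⊢
  intro k _
  have h1 := hx1 k (Set.mem_univ k)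
  have h2 := hx2 k (Set.mem_univ k)
  have hge : (0 : ℤ) ≤ Δs l k := by
    have := hmonoΔ l hl 0 (Nat.zero_le l) k
    rw [h0] at this; simpa using this
  have hle : Δs l k ≤ Δ k := by
    have := hmonoΔ r le_rfl l hl k
    rwa [hlastΔ] at this
  simp only [Pi.add_apply] at h2 ⊢
  constructor
  · exact le_trans (hmono k (by omega : ib k + Δs l k ≤ ib k + Δ k)) h2.1
  · exact le_trans h1.2 (hmono k (by omega : ib k + (p k : ℤ) + 1 ≤ ib k + Δs l k + p k + 1))
end

section
/- With slices S^j_i[m] := ⋃_{0 ≤ r ≤ m componentwise} Ω^j_{ℓ+1}(i+r) and δ_k the k-th standard basis vector: defining A := S^j_i[m], B := the union over r with r_k = m_k+1 of Ω^j_{ℓ+1}(i+r) (other components of r ranging 0..m_l), and C := S^j_i[m+δ_k], one has A ∪ B = C. Moreover, if j_k = 0 and the shortest-chain assumption holds, then A ∩ B ⊇ B^{j+δ_k}, where B^{j+δ_k} is the analogous union with superscript j+δ_k. -/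
/-- `D^j(i)`: indices of 0-form B-splines supported in `Ω'` (i.e. `Ω_{ℓ+1}`) that are
index-space neighbours of the `j`-extended knot domain `χ^j_i`. -/
def Dset {n : ℕ} (supp0 : (Fin n → ℤ) → Set (Fin n → ℝ)) (Ω' : Set (Fin n → ℝ))
    (j i : Fin n → ℤ) : Set (Fin n → ℤ) :=
  {a | supp0 a ⊆ Ω' ∧ ∀ l, 0 ≤ a l - i l ∧ a l - i l ≤ 1 - j l}

/-- The subdomain `Ω^j_{ℓ+1}(i) = ⋃_{ī ∈ D^j(i)} χ^1_ī`. -/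
def Om {n : ℕ} (supp0 : (Fin n → ℤ) → Set (Fin n → ℝ)) (Ω' : Set (Fin n → ℝ))
    (j i : Fin n → ℤ) : Set (Fin n → ℝ) :=
  ⋃ a ∈ Dset supp0 Ω' j i, supp0 a

/-- The slice `S^j_i[m] = ⋃_{0 ≤ r ≤ m} Ω^j_{ℓ+1}(i+r)`. -/
def Slice {n : ℕ} (supp0 : (Fin n → ℤ) → Set (Fin n → ℝ)) (Ω' : Set (Fin n → ℝ))
    (j i m : Fin n → ℤ) : Set (Fin n → ℝ) :=
  ⋃ (r : Fin n → ℤ) (_ : ∀ l, 0 ≤ r l ∧ r l ≤ m l), Om supp0 Ω' j (i + r)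

/-- The `k`-th standard basis vector `δ_k` in `ℤⁿ`. -/
def delta {n : ℕ} (k : Fin n) : Fin n → ℤ := fun l => if l = k then 1 else 0

/-- There is a shortest chain of 0-form B-splines supported in `Ω'` from `α_ī` to
`α_{ī+Δ}`: a sequence of length `r = Σ_k Δ_k` starting at `ī`, ending at `ī+Δ`, each
increment being a standard basis vector, all members supported in `Ω'`. -/
def IsShortestChain {n : ℕ} (supp0 : (Fin n → ℤ) → Set (Fin n → ℝ))
    (Ω' : Set (Fin n → ℝ)) (ib Δ : Fin n → ℤ) : Prop :=
  ∃ (r : ℕ) (Δs : ℕ → Fin n → ℤ),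
    (r : ℤ) = ∑ k, Δ k ∧ Δs 0 = 0 ∧ Δs r = Δ ∧
    (∀ l < r, ∃ k₀ : Fin n, Δs (l + 1) = Δs l + delta k₀) ∧
    (∀ l ≤ r, supp0 (ib + Δs l) ⊆ Ω')

/-- The two 0-form B-splines `α_a` and `α_b` share an `(n−1, ℓ+1)`-intersection: the
intersection of the closures of their supports contains a product of fine-level (level
`ℓ+1`) knot spans `(ξ'_{i'_k}, ξ'_{i'_k + p'_k})` in all directions but one, and a single
fine-level knot `{ξ'_{i'_{k₀}}}` in the remaining direction `k₀`. -/
def SharesInt {n : ℕ} (ξ' : Fin n → ℤ → ℝ) (p' : Fin n → ℕ)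
    (supp0 : (Fin n → ℤ) → Set (Fin n → ℝ)) (a b : Fin n → ℤ) : Prop :=
  ∃ (i' : Fin n → ℤ) (k₀ : Fin n),
    (Set.univ.pi fun k =>
        if k = k₀ then {ξ' k (i' k)}
        else Set.Ioo (ξ' k (i' k)) (ξ' k (i' k + p' k))) ⊆
      closure (supp0 a) ∩ closure (supp0 b)

/-- The shortest-chain assumption (Assumption 3 of the paper): any two 0-form B-splines
supported in `Ω_{ℓ+1}` sharing an `(n−1, ℓ+1)`-intersection are connected by a shortest
chain of 0-form B-splines supported in `Ω_{ℓ+1}`. -/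
def ShortestChainAssumption {n : ℕ} (ξ' : Fin n → ℤ → ℝ) (p' : Fin n → ℕ)
    (supp0 : (Fin n → ℤ) → Set (Fin n → ℝ)) (Ω' : Set (Fin n → ℝ)) : Prop :=
  ∀ ib Δ : Fin n → ℤ, (∀ k, 0 ≤ Δ k) → supp0 ib ⊆ Ω' → supp0 (ib + Δ) ⊆ Ω' →
    SharesInt ξ' p' supp0 ib (ib + Δ) → IsShortestChain supp0 Ω' ib Δ

/-- Slicing lemma: with `A = S^j_i[m]`, `B` the union over `r` with `r_k = m_k+1` (and
`0 ≤ r_l ≤ m_l` otherwise) of `Ω^j_{ℓ+1}(i+r)`, and `C = S^j_i[m+δ_k]`, one has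
`A ∪ B = C`; moreover if `j_k = 0` (and the shortest-chain assumption holds) then
`A ∩ B ⊇ B^{j+δ_k}`, the analogous union with superscript `j + δ_k`. -/
theorem stmt_15 {n : ℕ}
    (ξ' : Fin n → ℤ → ℝ) (p' : Fin n → ℕ)
    (supp0 : (Fin n → ℤ) → Set (Fin n → ℝ))
    (Ω' : Set (Fin n → ℝ))
    (hSC : ShortestChainAssumption ξ' p' supp0 Ω')
    (j i m : Fin n → ℤ) (hj : ∀ l, j l = 0 ∨ j l = 1) (hm : ∀ l, 0 ≤ m l)
    (k : Fin n)
    (A B B' Cs : Set (Fin n → ℝ))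
    (hA : A = Slice supp0 Ω' j i m)
    (hB : B = ⋃ (r : Fin n → ℤ)
        (_ : r k = m k + 1 ∧ ∀ l, l ≠ k → 0 ≤ r l ∧ r l ≤ m l),
        Om supp0 Ω' j (i + r))
    (hB' : B' = ⋃ (r : Fin n → ℤ)
        (_ : r k = m k + 1 ∧ ∀ l, l ≠ k → 0 ≤ r l ∧ r l ≤ m l),
        Om supp0 Ω' (j + delta k) (i + r))
    (hC : Cs = Slice supp0 Ω' j i (m + delta k)) :
    A ∪ B = Cs ∧ (j k = 0 → B' ⊆ A ∩ B) := by
  subst hA hB hB' hC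
  have hdk : delta k k = 1 := if_pos rfl
  have hdl : ∀ l, l ≠ k → delta k l = 0 := fun l hl => if_neg hl
  constructor
  · ext x
    simp only [Slice, Set.mem_union, Set.mem_iUnion]
    constructor
    · rintro (⟨r, hr, hx⟩ | ⟨r, ⟨hrk, hrl⟩, hx⟩)
      · refine ⟨r, fun l => ⟨(hr l).1, ?_⟩, hx⟩
        have := (hr l).2
        simp only [Pi.add_apply]
        rcases eq_or_ne l k with hl | hl
        · rw [hl] at this ⊢; rw [hdk]; omega
        · rw [hdl l hl]; omega
      · refine ⟨r, fun l => ?_, hx⟩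
        by_cases hl : l = k
        · subst hl
          have := hm l
          simp only [Pi.add_apply, hdk]
          omega
        · have := hrl l hl
          simp only [Pi.add_apply, hdl l hl]; omega
    · rintro ⟨r, hr, hx⟩
      by_cases hrk : r k ≤ m k
      · left
        refine ⟨r, fun l => ⟨(hr l).1, ?_⟩, hx⟩
        by_cases hl : l = k
        · subst hl; exact hrk
        · have := (hr l).2
          simp only [Pi.add_apply, hdl l hl] at this; omega
      · right
        have hk := (hr k).2
        simp only [Pi.add_apply, hdk] at hk
        refine ⟨r, ⟨by omega, fun l hl => ?_⟩, hx⟩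
        have := hr l
        simp only [Pi.add_apply, hdl l hl] at this
        omega
  · intro hjk x hx
    simp only [Set.mem_iUnion] at hx
    obtain ⟨r, ⟨hrk, hrl⟩, hx⟩ := hx
    simp only [Om, Set.mem_iUnion] at hx
    obtain ⟨a, ⟨hsup, hbnd⟩, hx⟩ := hx
    have hak : a k = i k + r k := by
      have := hbnd k
      simp only [Pi.add_apply, hdk, hjk] at this
      omega
    constructor
    · simp only [Slice, Set.mem_iUnion]
      refine ⟨r - delta k, fun l => ?_, Set.mem_iUnion₂.2 ⟨a, ⟨hsup, fun l => ?_⟩, hx⟩⟩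
      · by_cases hl : l = k
        · rw [hl]; simp only [Pi.sub_apply, hdk]
          have := hm k; omega
        · have := hrl l hl
          simp only [Pi.sub_apply, hdl l hl]; omega
      · by_cases hl : l = k
        · rw [hl]
          simp only [Pi.add_apply, Pi.sub_apply, hdk, hjk]
          omega
        · have := hbnd l
          simp only [Pi.add_apply, Pi.sub_apply, hdl l hl, add_zero] at this ⊢
          omega
    · simp only [Set.mem_iUnion]
      refine ⟨r, ⟨hrk, hrl⟩, Set.mem_iUnion₂.2 ⟨a, ⟨hsup, fun l => ?_⟩, hx⟩⟩
      obtain ⟨h1, h2⟩ := hbnd l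
      simp only [Pi.add_apply] at h1 h2 ⊢
      rcases eq_or_ne l k with hl | hl
      · rw [hl, hdk] at h2; rw [hl] at h1 ⊢; exact ⟨h1, by omega⟩
      · rw [hdl l hl] at h2; exact ⟨h1, by omega⟩
end
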